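/- (Lindenbaum lemma for IPCε) Every consistent infinite sequent w₀ can be extended to a maximal consistent infinite sequent. -/

import Mathlib

-- Terms of intuitionistic predicate logic with Hilbert’s ε-symbol (de Bruijn indices).
mutual
inductive Tm : Type
  | var : Nat → Tm
  | const : Nat → Tm
  | eps : Fm → Tm
inductive Tms : Type
  | nil : Tms
  | cons : Tm → Tms → Tms
inductive Fm : Type
  | atom : Nat → Tms → Fm
  | bot : Fm
  | top : Fm
  | and : Fm → Fm → Fm
  | or : Fm → Fm → Fm
  | imp : Fm → Fm → Fm
  | all : Fm → Fm
  | ex : Fm → Fm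
end

-- Lifting (shift de Bruijn variables ≥ c by one).
mutual
def Tm.lift : Nat → Tm → Tm
  | c, .var n => if n < c then .var n else .var (n+1)
  | _, .const k => .const k
  | c, .eps A => .eps (Fm.lift (c+1) A)
def Tms.lift : Nat → Tms → Tms
  | _, .nil => .nil
  | c, .cons t ts => .cons (Tm.lift c t) (Tms.lift c ts)
def Fm.lift : Nat → Fm → Fm
  | c, .atom p ts => .atom p (Tms.lift c ts)
  | _, .bot => .bot
  | _, .top => .top
  | c, .and A B => .and (Fm.lift c A) (Fm.lift c B)
  | c, .or A B => .or (Fm.lift c A) (Fm.lift c B)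
  | c, .imp A B => .imp (Fm.lift c A) (Fm.lift c B)
  | c, .all A => .all (Fm.lift (c+1) A)
  | c, .ex A => .ex (Fm.lift (c+1) A)
end

-- Substitution of a term for de Bruijn variable m.
mutual
def Tm.subst : Nat → Tm → Tm → Tm
  | m, s, .var n => if n < m then .var n else if n = m then s else .var (n-1)
  | _, _, .const k => .const k
  | m, s, .eps A => .eps (Fm.subst (m+1) (Tm.lift 0 s) A)
def Tms.subst : Nat → Tm → Tms → Tms
  | _, _, .nil => .nil
  | m, s, .cons t ts => .cons (Tm.subst m s t) (Tms.subst m s ts)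
def Fm.subst : Nat → Tm → Fm → Fm
  | m, s, .atom p ts => .atom p (Tms.subst m s ts)
  | _, _, .bot => .bot
  | _, _, .top => .top
  | m, s, .and A B => .and (Fm.subst m s A) (Fm.subst m s B)
  | m, s, .or A B => .or (Fm.subst m s A) (Fm.subst m s B)
  | m, s, .imp A B => .imp (Fm.subst m s A) (Fm.subst m s B)
  | m, s, .all A => .all (Fm.subst (m+1) (Tm.lift 0 s) A)
  | m, s, .ex A => .ex (Fm.subst (m+1) (Tm.lift 0 s) A)
end

/-- `A.subst0 t` substitutes `t` for the outermost bound variable. -/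
def Fm.subst0 (A : Fm) (t : Tm) : Fm := Fm.subst 0 t A

/-- `t↓`: definedness of a term.  For `εx A(x)` it is `∃y(∃x A(x) → A(y))`;
for variables and constants it is `⊤`. -/
def Tm.down : Tm → Fm
  | .var _ => .top
  | .const _ => .top
  | .eps A => .ex (.imp (.ex (Fm.lift 1 (Fm.lift 1 A))) (Fm.lift 1 A))

/-- The Gentzen-style sequent calculus IPCε with ε-symbol:
`t↓`-guarded quantifier rules and the ε-form of the `∃`-left rule. -/
inductive IPCe : Set Fm → Fm → Prop
  | ax {Γ A} : A ∈ Γ → IPCe Γ A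
  | botL {Γ A} : Fm.bot ∈ Γ → IPCe Γ A
  | topR {Γ} : IPCe Γ .top
  | andR {Γ A B} : IPCe Γ A → IPCe Γ B → IPCe Γ (.and A B)
  | andL {Γ A B G} : Fm.and A B ∈ Γ → IPCe (insert A (insert B Γ)) G → IPCe Γ G
  | orR₁ {Γ A B} : IPCe Γ A → IPCe Γ (.or A B)
  | orR₂ {Γ A B} : IPCe Γ B → IPCe Γ (.or A B)
  | orL {Γ A B G} : Fm.or A B ∈ Γ → IPCe (insert A Γ) G → IPCe (insert B Γ) G →
      IPCe Γ G
  | impR {Γ A B} : IPCe (insert A Γ) B → IPCe Γ (.imp A B)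
  | impL {Γ A B G} : Fm.imp A B ∈ Γ → IPCe Γ A → IPCe (insert B Γ) G → IPCe Γ G
  | allR {Γ A} : IPCe (Fm.lift 0 '' Γ) A → IPCe Γ (.all A)
  | allL {Γ A t G} : Fm.all A ∈ Γ → IPCe Γ t.down →
      IPCe (insert (A.subst0 t) Γ) G → IPCe Γ G
  | exR {Γ A t} : IPCe Γ t.down → IPCe Γ (A.subst0 t) → IPCe Γ (.ex A)
  | exL {Γ A G} : Fm.ex A ∈ Γ → IPCe (insert (A.subst0 (.eps A)) Γ) G → IPCe Γ G
  | cut {Γ C G} : IPCe Γ C → IPCe (insert C Γ) G → IPCe Γ G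
-- Occurrence of a free de Bruijn variable.
mutual
def Tm.hasVar : Nat → Tm → Prop
  | n, .var m => m = n
  | _, .const _ => False
  | n, .eps A => Fm.hasVar (n+1) A
def Tms.hasVar : Nat → Tms → Prop
  | _, .nil => False
  | n, .cons t ts => Tm.hasVar n t ∨ Tms.hasVar n ts
def Fm.hasVar : Nat → Fm → Prop
  | n, .atom _ ts => Tms.hasVar n ts
  | _, .bot => False
  | _, .top => False
  | n, .and A B => Fm.hasVar n A ∨ Fm.hasVar n B
  | n, .or A B => Fm.hasVar n A ∨ Fm.hasVar n B
  | n, .imp A B => Fm.hasVar n A ∨ Fm.hasVar n B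
  | n, .all A => Fm.hasVar (n+1) A
  | n, .ex A => Fm.hasVar (n+1) A
end

-- Occurrence of a constant.
mutual
def Tm.hasConst : Nat → Tm → Prop
  | _, .var _ => False
  | k, .const m => m = k
  | k, .eps A => Fm.hasConst k A
def Tms.hasConst : Nat → Tms → Prop
  | _, .nil => False
  | k, .cons t ts => Tm.hasConst k t ∨ Tms.hasConst k ts
def Fm.hasConst : Nat → Fm → Prop
  | k, .atom _ ts => Tms.hasConst k ts
  | _, .bot => False
  | _, .top => False
  | k, .and A B => Fm.hasConst k A ∨ Fm.hasConst k B
  | k, .or A B => Fm.hasConst k A ∨ Fm.hasConst k B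
  | k, .imp A B => Fm.hasConst k A ∨ Fm.hasConst k B
  | k, .all A => Fm.hasConst k A
  | k, .ex A => Fm.hasConst k A
end

/-- An infinite sequent: a pair of sets of formulas. -/
structure ISeq : Type where
  ant : Set Fm
  suc : Set Fm

/-- Well-formedness: infinitely many variables do not occur in the sequent. -/
def ISeq.Good (w : ISeq) : Prop :=
  {n : Nat | ∀ F ∈ w.ant ∪ w.suc, ¬ Fm.hasVar n F}.Infinite

/-- A formula is in the language `L_w` of `w`: all its free variables and constants
occur in formulas of `w`. -/
def ISeq.InLang (w : ISeq) (F : Fm) : Prop :=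
  (∀ n, Fm.hasVar n F → ∃ G ∈ w.ant ∪ w.suc, Fm.hasVar n G) ∧
  (∀ k, Fm.hasConst k F → ∃ G ∈ w.ant ∪ w.suc, Fm.hasConst k G)

/-- A term is in the language `L_w` of `w`. -/
def ISeq.TmInLang (w : ISeq) (t : Tm) : Prop :=
  (∀ n, Tm.hasVar n t → ∃ G ∈ w.ant ∪ w.suc, Fm.hasVar n G) ∧
  (∀ k, Tm.hasConst k t → ∃ G ∈ w.ant ∪ w.suc, Fm.hasConst k G)

/-- Consistency of an infinite sequent: no finite sequent `Γ₀ ⇒ ⋁Δ₀` with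
`Γ₀ ⊆ w_a`, `Δ₀ ⊆ w_s` is derivable in IPCε. -/
def ISeq.Consistent (w : ISeq) : Prop :=
  ¬ ∃ (L₁ L₂ : List Fm), (∀ F ∈ L₁, F ∈ w.ant) ∧ (∀ F ∈ L₂, F ∈ w.suc) ∧
      IPCe {F | F ∈ L₁} (L₂.foldr Fm.or Fm.bot)

/-- Maximal consistency: consistent and containing every formula of its language. -/
def ISeq.MaxConsistent (w : ISeq) : Prop :=
  w.Consistent ∧ ∀ F, w.InLang F → F ∈ w.ant ∪ w.suc

/-- The set `D(w)` of terms of the language of `w` that are defined in `w`,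
i.e. `t↓ ∈ w_a`. -/
def ISeq.D (w : ISeq) : Set Tm :=
  {t | w.TmInLang t ∧ Tm.down t ∈ w.ant}


/-! By Zorn's lemma there is a maximal consistent pair of sets extending `w₀`: consistency is a
finitary condition, so it passes to unions of chains. If a formula `F` were missing from both
sides of a maximal pair, adding it to either side would make the pair inconsistent, and a cut
on `F` combines the two derivations into a derivation refuting the pair itself. -/

namespace IPCe

theorem mono {Γ Γ' : Set Fm} {G : Fm} (h : IPCe Γ G) (hs : Γ ⊆ Γ') : IPCe Γ' G := by
  induction h generalizing Γ' with
  | ax hm => exact ax (hs hm)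
  | botL hm => exact botL (hs hm)
  | topR => exact topR
  | andR _ _ ih₁ ih₂ => exact andR (ih₁ hs) (ih₂ hs)
  | andL hm _ ih =>
    exact andL (hs hm) (ih (Set.insert_subset_insert (Set.insert_subset_insert hs)))
  | orR₁ _ ih => exact orR₁ (ih hs)
  | orR₂ _ ih => exact orR₂ (ih hs)
  | orL hm _ _ ih₁ ih₂ =>
    exact orL (hs hm) (ih₁ (Set.insert_subset_insert hs)) (ih₂ (Set.insert_subset_insert hs))
  | impR _ ih => exact impR (ih (Set.insert_subset_insert hs))
  | impL hm _ _ ih₁ ih₂ => exact impL (hs hm) (ih₁ hs) (ih₂ (Set.insert_subset_insert hs))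
  | allR _ ih => exact allR (ih (Set.image_mono hs))
  | allL hm _ _ ih₁ ih₂ => exact allL (hs hm) (ih₁ hs) (ih₂ (Set.insert_subset_insert hs))
  | exR _ _ ih₁ ih₂ => exact exR (ih₁ hs) (ih₂ hs)
  | exL hm _ ih => exact exL (hs hm) (ih (Set.insert_subset_insert hs))
  | cut _ _ ih₁ ih₂ => exact cut (ih₁ hs) (ih₂ (Set.insert_subset_insert hs))

theorem foldr_or_of_mem {Γ : Set Fm} {A : Fm} {L : List Fm} (hA : A ∈ L) (h : IPCe Γ A) :
    IPCe Γ (L.foldr Fm.or Fm.bot) := by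
  induction L with
  | nil => cases hA
  | cons B L ih =>
    rcases List.mem_cons.mp hA with rfl | hA
    · exact orR₁ h
    · exact orR₂ (ih hA)

theorem foldr_or_elim {G : Fm} (L : List Fm) {Γ : Set Fm}
    (h : ∀ A ∈ L, IPCe (insert A Γ) G) : IPCe (insert (L.foldr Fm.or Fm.bot) Γ) G := by
  induction L generalizing Γ with
  | nil => exact botL (Set.mem_insert _ _)
  | cons B L ih =>
    have hsub : ∀ A, insert A Γ ⊆ insert A (insert (B.or (L.foldr Fm.or Fm.bot)) Γ) :=
      fun _ => Set.insert_subset_insert (Set.subset_insert _ _)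
    refine orL (Set.mem_insert _ _) ((h B List.mem_cons_self).mono (hsub B)) ?_
    exact ih fun A hA => (h A (List.mem_cons_of_mem _ hA)).mono (hsub A)

theorem foldr_or_mono {Γ : Set Fm} {L L' : List Fm} (hs : ∀ A ∈ L, A ∈ L')
    (h : IPCe Γ (L.foldr Fm.or Fm.bot)) : IPCe Γ (L'.foldr Fm.or Fm.bot) :=
  cut h (foldr_or_elim L fun _ hA => foldr_or_of_mem (hs _ hA) (ax (Set.mem_insert _ _)))

end IPCe

namespace ISeq

variable {a s : Set Fm} {F : Fm}

theorem exists_derivation_of_not_consistent_insert_ant (h : ¬ Consistent ⟨insert F a, s⟩) :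
    ∃ L₁ L₂ : List Fm, (∀ A ∈ L₁, A ∈ a) ∧ (∀ B ∈ L₂, B ∈ s) ∧
      IPCe (insert F {A | A ∈ L₁}) (L₂.foldr Fm.or Fm.bot) := by
  classical
  obtain ⟨L₁, L₂, h₁, h₂, d⟩ := not_not.mp h
  refine ⟨L₁.filter (· ∈ a), L₂, fun A hA => by simpa using (List.mem_filter.mp hA).2,
    h₂, d.mono fun A hA => ?_⟩
  rcases h₁ A hA with rfl | ha
  · exact Set.mem_insert _ _
  · exact Or.inr (List.mem_filter.mpr ⟨hA, by simpa using ha⟩)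

theorem exists_derivation_of_not_consistent_insert_suc (h : ¬ Consistent ⟨a, insert F s⟩) :
    ∃ L₁ L₂ : List Fm, (∀ A ∈ L₁, A ∈ a) ∧ (∀ B ∈ L₂, B ∈ s) ∧
      IPCe {A | A ∈ L₁} ((F :: L₂).foldr Fm.or Fm.bot) := by
  classical
  obtain ⟨L₁, L₂, h₁, h₂, d⟩ := not_not.mp h
  refine ⟨L₁, L₂.filter (· ∈ s), h₁,
    fun B hB => by simpa using (List.mem_filter.mp hB).2, d.foldr_or_mono fun B hB => ?_⟩
  rcases h₂ B hB with rfl | hs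
  · exact List.mem_cons_self
  · exact List.mem_cons_of_mem _ (List.mem_filter.mpr ⟨hB, by simpa using hs⟩)

theorem not_consistent_of_not_consistent_insert (h₁ : ¬ Consistent ⟨insert F a, s⟩)
    (h₂ : ¬ Consistent ⟨a, insert F s⟩) : ¬ Consistent ⟨a, s⟩ := by
  obtain ⟨L₁, L₂, hL₁, hL₂, dF⟩ := exists_derivation_of_not_consistent_insert_ant h₁
  obtain ⟨M₁, M₂, hM₁, hM₂, d⟩ := exists_derivation_of_not_consistent_insert_suc h₂
  have hΓ₁ : {A | A ∈ L₁} ⊆ {A | A ∈ L₁ ++ M₁} := fun _ => List.mem_append_left _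
  have hΓ₂ : {A | A ∈ M₁} ⊆ {A | A ∈ L₁ ++ M₁} := fun _ => List.mem_append_right _
  refine not_not.mpr ⟨L₁ ++ M₁, L₂ ++ M₂, ?_, ?_, ?_⟩
  · simpa [or_imp, forall_and] using ⟨hL₁, hM₁⟩
  · simpa [or_imp, forall_and] using ⟨hL₂, hM₂⟩
  refine IPCe.cut (d.mono hΓ₂) (IPCe.foldr_or_elim _ fun B hB => ?_)
  rcases List.mem_cons.mp hB with rfl | hB
  · exact (dF.mono (Set.insert_subset_insert hΓ₁)).foldr_or_mono
      fun _ => List.mem_append_left _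
  · exact IPCe.foldr_or_of_mem (List.mem_append_right _ hB) (IPCe.ax (Set.mem_insert _ _))

theorem consistent_biUnion_of_isChain {c : Set (Set Fm × Set Fm)} (hc : IsChain (· ≤ ·) c)
    (hne : c.Nonempty) (hcon : ∀ p ∈ c, Consistent ⟨p.1, p.2⟩) :
    Consistent ⟨⋃ p ∈ c, p.1, ⋃ p ∈ c, p.2⟩ := by
  classical
  rintro ⟨L₁, L₂, h₁, h₂, d⟩
  obtain ⟨p, hp, hp₁⟩ := (hc.directedOn.mono fun _ _ h => h.1)
    |>.exists_mem_subset_of_finset_subset_biUnion hne (s := L₁.toFinset)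
      (by simpa [Set.subset_def] using h₁)
  obtain ⟨q, hq, hq₂⟩ := (hc.directedOn.mono fun _ _ h => h.2)
    |>.exists_mem_subset_of_finset_subset_biUnion hne (s := L₂.toFinset)
      (by simpa [Set.subset_def] using h₂)
  obtain ⟨r, hr, hpr, hqr⟩ := hc.directedOn p hp q hq
  exact hcon r hr ⟨L₁, L₂, fun A hA => hpr.1 (hp₁ (by simpa using hA)),
    fun B hB => hqr.2 (hq₂ (by simpa using hB)), d⟩

theorem mem_or_mem_of_maximal {m : Set Fm × Set Fm}
    (hm : Maximal (fun p : Set Fm × Set Fm => Consistent ⟨p.1, p.2⟩) m) (F : Fm) :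
    F ∈ m.1 ∨ F ∈ m.2 := by
  by_contra hF
  have h₁ : ¬ Consistent ⟨insert F m.1, m.2⟩ := fun h =>
    hF (Or.inl ((hm.2 (y := (insert F m.1, m.2)) h ⟨Set.subset_insert _ _, le_rfl⟩).1
      (Set.mem_insert _ _)))
  have h₂ : ¬ Consistent ⟨m.1, insert F m.2⟩ := fun h =>
    hF (Or.inr ((hm.2 (y := (m.1, insert F m.2)) h ⟨le_rfl, Set.subset_insert _ _⟩).2
      (Set.mem_insert _ _)))
  exact not_consistent_of_not_consistent_insert h₁ h₂ hm.1

end ISeq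

/-- Lindenbaum lemma for IPCε: every consistent infinite sequent can
be extended to a maximal consistent infinite sequent. -/
theorem lindenbaum_IPCe (w₀ : ISeq) (hgood : w₀.Good) (hcon : w₀.Consistent) :
    ∃ w : ISeq, w₀.ant ⊆ w.ant ∧ w₀.suc ⊆ w.suc ∧ w.MaxConsistent := by
  obtain ⟨m, ⟨hant, hsuc⟩, hm⟩ :=
    zorn_le_nonempty₀ {p : Set Fm × Set Fm | ISeq.Consistent ⟨p.1, p.2⟩}
    (fun c hcS hc y hy => ⟨(⋃ p ∈ c, p.1, ⋃ p ∈ c, p.2),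
      ISeq.consistent_biUnion_of_isChain hc ⟨y, hy⟩ hcS,
      fun _ hz => ⟨Set.subset_biUnion_of_mem hz, Set.subset_biUnion_of_mem hz⟩⟩)
    (w₀.ant, w₀.suc) hcon
  exact ⟨⟨m.1, m.2⟩, hant, hsuc, hm.1, fun F _ => ISeq.mem_or_mem_of_maximal hm F⟩
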